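/- For every positive integer n, the words a_n = ξ^n(a) and b_n = ξ^n(b) of the period doubling substitution agree in all positions except the last (rightmost) letter: for all indices i < 2^n - 1, the i-th letter of a_n equals the i-th letter of b_n, and the last letters differ. -/

import Mathlib

/-!
Since ξ(x) = a · x̄ with x̄ the other letter, ξ^{n+1}(x) = a_n · ξ^n(x̄); hence a_{n+1} = a_n b_n and
b_{n+1} = a_n a_n. By induction a_n and b_n share everything but their last letters, and these
swap at each step.
-/

/-- Alphabet of the period doubling substitution. -/
inductive PDLetter : Type
  | a : PDLetter
  | b : PDLetter

/-- The period doubling substitution: ξ(a) = ab, ξ(b) = aa. -/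
def pdXi : PDLetter → List PDLetter
  | PDLetter.a => [PDLetter.a, PDLetter.b]
  | PDLetter.b => [PDLetter.a, PDLetter.a]

/-- Extension of ξ to words by concatenation. -/
def pdXiWord (w : List PDLetter) : List PDLetter := w.flatMap pdXi

namespace PDLetter

def swap : PDLetter → PDLetter
  | a => b
  | b => a

@[simp]
lemma swap_swap (x : PDLetter) : x.swap.swap = x := by
  cases x <;> rfl

lemma swap_ne (x : PDLetter) : x.swap ≠ x := by
  cases x <;> simp [swap]

end PDLetter

open PDLetter

lemma pdXi_eq_pair_swap (x : PDLetter) : pdXi x = [a, x.swap] := by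
  cases x <;> rfl

lemma pdXiWord_append (u v : List PDLetter) :
    pdXiWord (u ++ v) = pdXiWord u ++ pdXiWord v :=
  List.flatMap_append

lemma length_pdXiWord (w : List PDLetter) : (pdXiWord w).length = 2 * w.length := by
  simp [pdXiWord, pdXi_eq_pair_swap, List.length_flatMap, mul_comm]

lemma length_iterate_pdXiWord (n : ℕ) (w : List PDLetter) :
    (pdXiWord^[n] w).length = 2 ^ n * w.length := by
  induction n with
  | zero => simp
  | succ n ih => rw [Function.iterate_succ_apply', length_pdXiWord, ih, pow_succ]; ring

lemma iterate_pdXiWord_append (n : ℕ) (u v : List PDLetter) :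
    pdXiWord^[n] (u ++ v) = pdXiWord^[n] u ++ pdXiWord^[n] v := by
  induction n with
  | zero => rfl
  | succ n ih => simp only [Function.iterate_succ_apply', ih, pdXiWord_append]

lemma iterate_succ_pdXiWord_singleton (n : ℕ) (x : PDLetter) :
    pdXiWord^[n + 1] [x] = pdXiWord^[n] [a] ++ pdXiWord^[n] [x.swap] := by
  rw [Function.iterate_succ_apply, ← iterate_pdXiWord_append]
  simp [pdXiWord, pdXi_eq_pair_swap]

lemma exists_iterate_pdXiWord_eq_append (n : ℕ) :
    ∃ (w : List PDLetter) (x : PDLetter),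
      pdXiWord^[n] [a] = w ++ [x] ∧ pdXiWord^[n] [b] = w ++ [x.swap] := by
  induction n with
  | zero => exact ⟨[], a, rfl, rfl⟩
  | succ n ih =>
    obtain ⟨w, x, ha, hb⟩ := ih
    refine ⟨pdXiWord^[n] [a] ++ w, x.swap, ?_, ?_⟩
    · rw [iterate_succ_pdXiWord_singleton, show a.swap = b from rfl, hb, List.append_assoc]
    · rw [iterate_succ_pdXiWord_singleton, show b.swap = a from rfl, swap_swap,
        List.append_assoc, ← ha]

theorem pd_agree_except_last_general (n : ℕ) :
    (∀ i : ℕ, i < 2 ^ n - 1 →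
      (pdXiWord^[n] [PDLetter.a])[i]? = (pdXiWord^[n] [PDLetter.b])[i]?) ∧
    (pdXiWord^[n] [PDLetter.a])[2 ^ n - 1]?
      ≠ (pdXiWord^[n] [PDLetter.b])[2 ^ n - 1]? := by
  obtain ⟨w, x, ha, hb⟩ := exists_iterate_pdXiWord_eq_append n
  have hw : w.length = 2 ^ n - 1 := by
    have := length_iterate_pdXiWord n [a]
    rw [ha] at this
    simp only [List.length_append, List.length_singleton, mul_one] at this
    omega
  constructor
  · intro i hi
    rw [ha, hb, List.getElem?_append_left (by omega), List.getElem?_append_left (by omega)]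
  · rw [ha, hb, ← hw, List.getElem?_append_right le_rfl, List.getElem?_append_right le_rfl]
    simpa using (swap_ne x).symm

/-- for n ≥ 1, a_n and b_n agree except at the last letter. -/
theorem pd_agree_except_last (n : ℕ) (hn : 1 ≤ n) :
    (∀ i : ℕ, i < 2 ^ n - 1 →
      (pdXiWord^[n] [PDLetter.a])[i]? = (pdXiWord^[n] [PDLetter.b])[i]?) ∧
    (pdXiWord^[n] [PDLetter.a])[2 ^ n - 1]?
      ≠ (pdXiWord^[n] [PDLetter.b])[2 ^ n - 1]? :=
  pd_agree_except_last_general n
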